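/- arXiv:2503.22314 — 4 statements merged into one kernel-verified Lean document; each statement's English description precedes it below -/
import Mathlib

section
/- Let φ ∈ End_A(A^n) be idempotent and define the (L,φ)-connection ∇̄(x) := φ ∘ ρ_B(x) ∘ φ for x ∈ Der_k(A). Then for any x, y ∈ Der_k(A), the curvature R(x,y) := [∇̄(x), ∇̄(y)] − ∇̄([x,y]) equals φ ∘ [x(φ), y(φ)], where x(φ) denotes the entrywise derivative of the matrix of φ and [·,·] is the commutator in End_A(A^n). -/
/-- The operator `ρ_B(x)` applying the derivation `x` to each coordinate of `Aⁿ`. -/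
def rhoB {k A : Type*} [CommRing k] [CommRing A] [Algebra k A] {n : ℕ}
    (x : Derivation k A A) (u : Fin n → A) : Fin n → A :=
  fun i => x (u i)

/-- The `(L,φ)`-connection `∇̄(x) = φ ∘ ρ_B(x) ∘ φ` on `Aⁿ` determined by the
idempotent matrix `P`. -/
def nablaBar {k A : Type*} [CommRing k] [CommRing A] [Algebra k A] {n : ℕ}
    (P : Matrix (Fin n) (Fin n) A) (x : Derivation k A A) (u : Fin n → A) : Fin n → A :=
  P.mulVec (rhoB x (P.mulVec u))

/-- Leibniz rule for `ρ_B(x)` applied to a matrix-vector product. -/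
lemma rhoB_leib {k A : Type*} [CommRing k] [CommRing A] [Algebra k A] {n : ℕ}
    (x : Derivation k A A) (M : Matrix (Fin n) (Fin n) A) (v : Fin n → A) :
    rhoB x (M.mulVec v) = (M.map fun a => x a).mulVec v + M.mulVec (rhoB x v) := by
  funext i
  simp only [rhoB, Matrix.mulVec, dotProduct, Matrix.map_apply, Pi.add_apply,
    map_sum, Derivation.leibniz, ← Finset.sum_add_distrib]
  refine Finset.sum_congr rfl fun j _ => ?_
  simp only [smul_eq_mul]; ring

lemma rhoB_add {k A : Type*} [CommRing k] [CommRing A] [Algebra k A] {n : ℕ}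
    (x : Derivation k A A) (u v : Fin n → A) :
    rhoB x (u + v) = rhoB x u + rhoB x v := by
  funext i; simp [rhoB]

/-- Leibniz rule for the entrywise derivative of a matrix product. -/
lemma map_mul_leib {k A : Type*} [CommRing k] [CommRing A] [Algebra k A] {n : ℕ}
    (x : Derivation k A A) (M N : Matrix (Fin n) (Fin n) A) :
    (M * N).map (fun a => x a) = (M.map fun a => x a) * N + M * (N.map fun a => x a) := by
  ext i j
  simp only [Matrix.map_apply, Matrix.mul_apply, Matrix.add_apply, map_sum,
    Derivation.leibniz, ← Finset.sum_add_distrib]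
  refine Finset.sum_congr rfl fun l _ => ?_
  simp only [smul_eq_mul]; ring

/-- the curvature `R(x,y) = [∇̄x,∇̄y] − ∇̄[x,y]` of the lifted
connection equals `φ ∘ [x(φ), y(φ)]`. -/
theorem stmt_5 {k A : Type*} [CommRing k] [CommRing A] [Algebra k A]
    (n : ℕ) (P : Matrix (Fin n) (Fin n) A) (hP : P * P = P)
    (x y : Derivation k A A) (u : Fin n → A) :
    nablaBar P x (nablaBar P y u) - nablaBar P y (nablaBar P x u)
        - nablaBar P ⁅x, y⁆ u =
      (P * ((P.map fun a => x a) * (P.map fun a => y a)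
        - (P.map fun a => y a) * (P.map fun a => x a))).mulVec u := by
  have nab : ∀ (z : Derivation k A A) (v : Fin n → A),
      nablaBar P z v = (P * P.map fun a => z a).mulVec v + P.mulVec (rhoB z v) := by
    intro z v
    rw [nablaBar, rhoB_leib, Matrix.mulVec_add, Matrix.mulVec_mulVec, Matrix.mulVec_mulVec, hP]
  have hb1 : (P.map fun a => (⁅x,y⁆ : Derivation k A A) a)
      = (P.map fun a => x (y a)) - (P.map fun a => y (x a)) := by
    ext i j; simp [Derivation.commutator_apply]
  have hb2 : rhoB (⁅x,y⁆) u = rhoB x (rhoB y u) - rhoB y (rhoB x u) := by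
    funext i; simp [rhoB, Derivation.commutator_apply]
  have hZ : ∀ z : Derivation k A A, P * (P.map fun a => z a) * P = 0 := by
    intro z
    have h1 := map_mul_leib z P P
    rw [hP] at h1
    have h2 : P * P.map (fun a => z a) =
        P * P.map (fun a => z a) * P + P * P.map (fun a => z a) := by
      conv_lhs => rw [h1]
      rw [mul_add, ← mul_assoc, ← mul_assoc, hP]
    exact right_eq_add.mp h2
  simp only [nab, Matrix.mulVec_add, rhoB_add, rhoB_leib, Matrix.mulVec_mulVec,
    map_mul_leib, Matrix.add_mulVec, hb1, hb2, Matrix.sub_mulVec, Matrix.mulVec_sub,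
    Matrix.mul_sub, Matrix.mulVec_mulVec]
  simp only [Matrix.map_map, Function.comp_def, ← mul_assoc, hP, hZ, zero_mul,
    Matrix.zero_mulVec, zero_add, add_zero]
  abel
end

section
/- Let D(L,E,∇) := End_A(E) ⊕ L with bracket [(f,x),(g,y)] := ([f,g] + [∇(x),g] − [∇(y),f] + R_∇(x,y), [x,y]) and anchor α_E(f,x) := α(x). Then D(L,E,∇) is an A/k Lie–Rinehart algebra; in particular the bracket satisfies the Jacobi identity. -/
/-- An `A/k` Lie–Rinehart algebra: `L` is an `A`-module and a `k`-Lie ring with an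
`A`-linear anchor `α : L → Der_k(A)` that preserves brackets and satisfies the
Leibniz rule `⁅x, a•y⁆ = a•⁅x,y⁆ + α(x)(a)•y`. -/
structure LieRinehart (k A L : Type*) [CommRing k] [CommRing A] [Algebra k A]
    [LieRing L] [Module A L] where
  α : L →ₗ[A] Derivation k A A
  map_bracket : ∀ x y : L, α ⁅x, y⁆ = ⁅α x, α y⁆
  leibniz : ∀ (x y : L) (a : A), ⁅x, a • y⁆ = a • ⁅x, y⁆ + (α x) a • y

variable {k A L E : Type*} [CommRing k] [CommRing A] [Algebra k A]
  [LieRing L] [Module A L] [AddCommGroup E] [Module k E] [Module A E]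
  [IsScalarTower k A E] [SMulCommClass k A E]

/-- An `L`-connection on `E`: an `A`-linear map `∇ : L → End_k(E)` with
`∇(x)(a•e) = a•∇(x)(e) + α(x)(a)•e`. -/
def IsConn (R : LieRinehart k A L) (nab : L →ₗ[A] Module.End k E) : Prop :=
  ∀ (x : L) (a : A) (e : E), nab x (a • e) = a • nab x e + R.α x a • e

/-- The curvature `R_∇(x,y) = [∇x,∇y] − ∇⁅x,y⁆`. -/
def curv (nab : L → Module.End k E) (x y : L) : Module.End k E :=
  ⁅nab x, nab y⁆ - nab ⁅x, y⁆

/-- The bracket on `D(L,E,∇) = End(E) ⊕ L`: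
`[(f,x),(g,y)] = ([f,g] + [∇x,g] − [∇y,f] + R_∇(x,y), [x,y])`. -/
def Db (nab : L → Module.End k E) (z w : Module.End k E × L) :
    Module.End k E × L :=
  (⁅z.1, w.1⁆ + ⁅nab z.2, w.1⁆ - ⁅nab w.2, z.1⁆ + curv nab z.2 w.2, ⁅z.2, w.2⁆)

set_option linter.unusedSectionVars false
attribute [local instance] LieRing.ofAssociativeRing

-- helper: Leibniz operators
def LeibOp (d : Derivation k A A) (f : Module.End k E) : Prop :=
  ∀ (a : A) (e : E), f (a • e) = a • f e + d a • e

lemma LeibOp.lieOp {d₁ d₂ : Derivation k A A} {f g : Module.End k E}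
    (h1 : LeibOp d₁ f) (h2 : LeibOp d₂ g) : LeibOp ⁅d₁, d₂⁆ ⁅f, g⁆ := by
  intro a e
  rw [Ring.lie_def, LinearMap.sub_apply, Module.End.mul_apply, Module.End.mul_apply,
    h2 a e, map_add, h1, h1, h1 a e, map_add, h2, h2, Derivation.commutator_apply]
  simp only [LinearMap.sub_apply, Module.End.mul_apply, smul_sub, sub_smul]
  abel

lemma LeibOp.lie_smul {d : Derivation k A A} {f : Module.End k E}
    (h : LeibOp d f) (a : A) (g : Module.End k E) :
    ⁅f, a • g⁆ = a • ⁅f, g⁆ + d a • g := by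
  ext e
  simp only [Ring.lie_def, LinearMap.sub_apply, Module.End.mul_apply, LinearMap.smul_apply,
    LinearMap.add_apply]
  rw [h]
  module

-- key reformulation of Db
lemma Db_eq (nab : L →ₗ[A] Module.End k E) (z w : Module.End k E × L) :
    Db (⇑nab) z w =
      (⁅z.1 + nab z.2, w.1 + nab w.2⁆ - nab ⁅z.2, w.2⁆, ⁅z.2, w.2⁆) := by
  simp only [Db, curv, lie_add, add_lie, ← lie_skew (nab w.2) z.1, Prod.mk.injEq]
  exact ⟨by abel, trivial⟩

/-- `D(L,E,∇)` with the bracket above and anchor `(f,x) ↦ α(x)` is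
an `A/k` Lie–Rinehart algebra: the bracket is alternating, satisfies the Jacobi
identity, satisfies the Lie–Rinehart Leibniz rule with respect to the anchor on
elements whose first component is `A`-linear, and `End_A(E) ⊕ L` is closed
under it. -/
theorem stmt_12 (R : LieRinehart k A L)
    (nab : L →ₗ[A] Module.End k E) (hconn : IsConn R nab) :
    (∀ z : Module.End k E × L, Db (⇑nab) z z = 0) ∧
    (∀ z₁ z₂ z₃ : Module.End k E × L,
        Db (⇑nab) z₁ (Db (⇑nab) z₂ z₃) + Db (⇑nab) z₂ (Db (⇑nab) z₃ z₁)
          + Db (⇑nab) z₃ (Db (⇑nab) z₁ z₂) = 0) ∧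
    (∀ (z w : Module.End k E × L) (a : A),
        (∀ (b : A) (e : E), z.1 (b • e) = b • z.1 e) →
        Db (⇑nab) z (a • w) = a • Db (⇑nab) z w + (R.α z.2 a • w.1, R.α z.2 a • w.2)) ∧
    (∀ z w : Module.End k E × L,
        (∀ (b : A) (e : E), z.1 (b • e) = b • z.1 e) →
        (∀ (b : A) (e : E), w.1 (b • e) = b • w.1 e) →
        ∀ (b : A) (e : E), (Db (⇑nab) z w).1 (b • e) = b • (Db (⇑nab) z w).1 e) := by
  have hleib : ∀ (z : Module.End k E × L),
      (∀ (b : A) (e : E), z.1 (b • e) = b • z.1 e) →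
      LeibOp (R.α z.2) (z.1 + nab z.2) := by
    intro z hz a e
    simp only [LinearMap.add_apply, hz, hconn z.2 a e]
    module
  refine ⟨?_, ?_, ?_, ?_⟩
  · intro z
    simp [Db_eq, Prod.ext_iff]
  · intro z₁ z₂ z₃
    simp only [Db_eq, sub_add_cancel, Prod.mk_add_mk, Prod.ext_iff, Prod.fst_zero,
      Prod.snd_zero]
    constructor
    · have h1 := lie_jacobi (z₁.1 + nab z₁.2) (z₂.1 + nab z₂.2) (z₃.1 + nab z₃.2)
      have h3 : nab ⁅z₁.2, ⁅z₂.2, z₃.2⁆⁆ + nab ⁅z₂.2, ⁅z₃.2, z₁.2⁆⁆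
          + nab ⁅z₃.2, ⁅z₁.2, z₂.2⁆⁆ = 0 := by
        rw [← map_add, ← map_add, lie_jacobi, map_zero]
      linear_combination (norm := abel) h1 - h3
    · exact lie_jacobi _ _ _
  · intro z w a hz
    have hz' := hleib z hz
    simp only [Db_eq, Prod.smul_fst, Prod.smul_snd, map_smul, Prod.mk_add_mk,
      Prod.smul_mk, Prod.mk.injEq]
    rw [← smul_add, hz'.lie_smul, R.leibniz]
    constructor
    · simp only [map_add, map_smul, smul_add, smul_sub]; abel
    · rfl
  · intro z w hz hw b e
    have key : LeibOp (0 : Derivation k A A) ((Db (⇑nab) z w).1) := by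
      rw [Db_eq]
      have h := (hleib z hz).lieOp (hleib w hw)
      intro a e
      simp only [LinearMap.sub_apply, h a e, hconn ⁅z.2, w.2⁆ a e, R.map_bracket,
        Derivation.coe_zero, Pi.zero_apply]
      module
    rw [key b e]
    simp
end

section
/- The projection p_E : D(L,E,∇) → L, (f,x) ↦ x, admits a section s_P(x) := (P(x), x) (P ∈ Hom_A(L, End_A(E))) that is a map of k-Lie algebras if and only if the connection ∇ + P is flat; in particular, p_E admits a Lie–Rinehart algebra splitting if and only if E admits a flat L-connection. -/
variable {k A L E : Type*} [CommRing k] [CommRing A] [Algebra k A]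
  [LieRing L] [Module A L] [AddCommGroup E] [Module k E] [Module A E]
  [IsScalarTower k A E] [SMulCommClass k A E]

/-- The section `s_P(x) = (P(x), x)` of the projection `D(L,E,∇) → L`. -/
def sP (P : L →ₗ[A] (E →ₗ[A] E)) (x : L) : Module.End k E × L :=
  (LinearMap.restrictScalars k (P x), x)

/-- `∇ + P` as an `A`-linear map `L → End_k(E)`. -/
def addP (nab : L →ₗ[A] Module.End k E) (P : L →ₗ[A] (E →ₗ[A] E)) :
    L →ₗ[A] Module.End k E where
  toFun x := nab x + LinearMap.restrictScalars k (P x)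
  map_add' x y := by ext e; simp; abel
  map_smul' a x := by ext e; simp

/-- The difference of two connections as an `A`-linear map `L → End_A(E)`. -/
def subC (R : LieRinehart k A L) (nab nab₂ : L →ₗ[A] Module.End k E)
    (hconn : IsConn R nab) (hc₂ : IsConn R nab₂) : L →ₗ[A] (E →ₗ[A] E) where
  toFun x :=
    { toFun := fun e => nab₂ x e - nab x e
      map_add' := fun e f => by simp; abel
      map_smul' := fun a e => by
        simp only [hconn x a e, hc₂ x a e, RingHom.id_apply, smul_sub]; abel }
  map_add' x y := by ext e; simp; abel
  map_smul' a x := by ext e; simp [smul_sub]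

lemma key (nab : L →ₗ[A] Module.End k E) (P : L →ₗ[A] (E →ₗ[A] E)) (x y : L) :
    Db (⇑nab) (sP P x) (sP P y) = sP P ⁅x, y⁆ ↔
      curv (fun z => nab z + LinearMap.restrictScalars k (P z)) x y = 0 := by
  have h : curv (fun z => nab z + LinearMap.restrictScalars k (P z)) x y =
      (Db (⇑nab) (sP P x) (sP P y)).1 - LinearMap.restrictScalars k (P ⁅x, y⁆) := by
    simp only [curv, Db, sP, Ring.lie_def]
    ext e
    simp [mul_add, add_mul]
    abel
  constructor
  · intro he
    rw [h, he]
    simp [sP]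
  · intro h0
    rw [h, sub_eq_zero] at h0
    exact Prod.ext h0 rfl

/-- the section `s_P` of `p_E : D(L,E,∇) → L` is a map of `k`-Lie
algebras iff the connection `∇ + P` is flat; hence `p_E` admits a Lie splitting
iff `E` admits a flat `L`-connection. -/
theorem stmt_13 (R : LieRinehart k A L)
    (nab : L →ₗ[A] Module.End k E) (hconn : IsConn R nab) :
    (∀ P : L →ₗ[A] (E →ₗ[A] E),
      ((∀ x y : L, Db (⇑nab) (sP P x) (sP P y) = sP P ⁅x, y⁆) ↔
        (∀ x y : L,
          curv (fun z => nab z + LinearMap.restrictScalars k (P z)) x y = 0))) ∧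
    ((∃ P : L →ₗ[A] (E →ₗ[A] E),
        ∀ x y : L, Db (⇑nab) (sP P x) (sP P y) = sP P ⁅x, y⁆) ↔
      (∃ nab₂ : L →ₗ[A] Module.End k E,
        IsConn R nab₂ ∧ ∀ x y : L, curv (⇑nab₂) x y = 0)) := by
  constructor
  · intro P
    exact forall_congr' fun x => forall_congr' fun y => key nab P x y
  · constructor
    · rintro ⟨P, hP⟩
      refine ⟨addP nab P, ?_, ?_⟩
      · intro x a e
        simp only [addP, LinearMap.coe_mk, AddHom.coe_mk, LinearMap.add_apply,
          LinearMap.coe_restrictScalars, hconn x a e, map_smul, LinearMap.smul_apply, smul_add]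
        abel
      · intro x y
        have := (key nab P x y).mp (hP x y)
        convert this using 2
        rfl
    · rintro ⟨nab₂, hc₂, hflat⟩
      refine ⟨subC R nab nab₂ hconn hc₂, fun x y => ?_⟩
      apply (key nab _ x y).mpr
      have heq : (fun z => nab z +
          LinearMap.restrictScalars k ((subC R nab nab₂ hconn hc₂) z)) = ⇑nab₂ := by
        funext z; ext e; simp [subC]
      rw [heq]
      exact hflat x y
end

section
/- Let A := k[x,y,z]/(x²+y²+z²−1) over a field k of characteristic zero, and Ω := Ω¹_{A/k} the module of Kähler differentials. The differential forms ω_n := (x²+y²)ⁿ(xz·dx + yz·dy) ∈ Ω are closed (d¹(ω_n) = 0 in Λ²Ω) for every n ≥ 0. -/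
open MvPolynomial

/-- The ideal `(x² + y² + z² − 1)` of `k[x,y,z]`. -/
noncomputable def sphereIdeal (k : Type*) [Field k] :
    Ideal (MvPolynomial (Fin 3) k) :=
  Ideal.span {X 0 ^ 2 + X 1 ^ 2 + X 2 ^ 2 - 1}

/-- The coordinate ring `A = k[x,y,z]/(x² + y² + z² − 1)` of the sphere. -/
abbrev SphereRing (k : Type*) [Field k] : Type _ :=
  MvPolynomial (Fin 3) k ⧸ sphereIdeal k

noncomputable def sx (k : Type*) [Field k] : SphereRing k :=
  Ideal.Quotient.mk (sphereIdeal k) (X 0)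

noncomputable def sy (k : Type*) [Field k] : SphereRing k :=
  Ideal.Quotient.mk (sphereIdeal k) (X 1)

noncomputable def sz (k : Type*) [Field k] : SphereRing k :=
  Ideal.Quotient.mk (sphereIdeal k) (X 2)

set_option synthInstance.maxHeartbeats 1000000 in
set_option maxHeartbeats 2000000 in
/-- over a field `k` of characteristic zero, the 1-forms
`ω_n = (x²+y²)ⁿ (xz·dx + yz·dy)` on the sphere are closed:
`d¹ω_n = d((x²+y²)ⁿxz) ∧ dx + d((x²+y²)ⁿyz) ∧ dy = 0` in `Λ² Ω¹_{A/k}`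
(computed in the exterior algebra of `Ω¹_{A/k}` over `A`). -/
theorem stmt_18 (k : Type*) [Field k] [CharZero k] (n : ℕ) :
    ExteriorAlgebra.ι (SphereRing k)
          ((KaehlerDifferential.D k (SphereRing k))
            ((sx k ^ 2 + sy k ^ 2) ^ n * (sx k * sz k)))
        * ExteriorAlgebra.ι (SphereRing k)
          ((KaehlerDifferential.D k (SphereRing k)) (sx k))
      + ExteriorAlgebra.ι (SphereRing k)
          ((KaehlerDifferential.D k (SphereRing k))
            ((sx k ^ 2 + sy k ^ 2) ^ n * (sy k * sz k)))
        * ExteriorAlgebra.ι (SphereRing k)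
          ((KaehlerDifferential.D k (SphereRing k)) (sy k))
      = 0 := by
  set x := sx k with hx
  set y := sy k with hy
  set z := sz k with hz
  set D := KaehlerDifferential.D k (SphereRing k) with hD
  -- relation x² + y² + z² = 1
  have hone : x ^ 2 + y ^ 2 + z ^ 2 = 1 := by
    have h0 : Ideal.Quotient.mk (sphereIdeal k) (X 0 ^ 2 + X 1 ^ 2 + X 2 ^ 2 - 1) = 0 :=
      Ideal.Quotient.eq_zero_iff_mem.mpr (Ideal.subset_span rfl)
    have h1 : x ^ 2 + y ^ 2 + z ^ 2 - 1 = 0 := by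
      simpa [hx, hy, hz, sx, sy, sz, map_sub, map_add, map_pow, map_one] using h0
    linear_combination h1
  -- x dx + y dy + z dz = 0
  have hs : x • D x + y • D y + z • D z = 0 := by
    have h1 : D (x ^ 2 + y ^ 2 + z ^ 2) = 0 := by rw [hone]; simp
    have h2 : (x • D x + y • D y + z • D z) + (x • D x + y • D y + z • D z) = 0 := by
      have := h1
      simp only [map_add, pow_two, Derivation.leibniz] at this
      rw [← this]; abel
    have h3 : (2 : k) • (x • D x + y • D y + z • D z) = 0 := by
      rw [two_smul]; exact h2
    have h4 := congrArg (fun w => ((2 : k)⁻¹) • w) h3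
    simpa [smul_smul, inv_mul_cancel₀ (two_ne_zero (α := k))] using h4
  -- derivative of (x²+y²)^n
  have hDun : D ((x ^ 2 + y ^ 2) ^ n)
      = ((n : SphereRing k) * (x ^ 2 + y ^ 2) ^ (n - 1) * (2 * x)) • D x
        + ((n : SphereRing k) * (x ^ 2 + y ^ 2) ^ (n - 1) * (2 * y)) • D y := by
    rw [Derivation.leibniz_pow]
    rw [map_add, Derivation.leibniz_pow, Derivation.leibniz_pow]
    simp only [← Nat.cast_smul_eq_nsmul (SphereRing k), pow_one]
    module
  have hD1 : D ((x ^ 2 + y ^ 2) ^ n * (x * z))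
      = ((x ^ 2 + y ^ 2) ^ n * z + x * z * ((n : SphereRing k) * (x ^ 2 + y ^ 2) ^ (n - 1) * (2 * x))) • D x
        + (x * z * ((n : SphereRing k) * (x ^ 2 + y ^ 2) ^ (n - 1) * (2 * y))) • D y
        + ((x ^ 2 + y ^ 2) ^ n * x) • D z := by
    rw [Derivation.leibniz, Derivation.leibniz, hDun]
    module
  have hD2 : D ((x ^ 2 + y ^ 2) ^ n * (y * z))
      = (y * z * ((n : SphereRing k) * (x ^ 2 + y ^ 2) ^ (n - 1) * (2 * x))) • D x
        + ((x ^ 2 + y ^ 2) ^ n * z + y * z * ((n : SphereRing k) * (x ^ 2 + y ^ 2) ^ (n - 1) * (2 * y))) • D y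
        + ((x ^ 2 + y ^ 2) ^ n * y) • D z := by
    rw [Derivation.leibniz, Derivation.leibniz, hDun]
    module
  set E := ExteriorAlgebra.ι (SphereRing k) (M := Ω[SphereRing k⁄k]) with hE
  set a := E (D x) with ha
  set b := E (D y) with hb
  set c := E (D z) with hc
  have key : x • (c * a) + y • (c * b) = 0 := by
    have h5 : E (x • D x + y • D y + z • D z) = 0 := by rw [hs]; simp
    have h6 : c * E (x • D x + y • D y + z • D z) = 0 := by rw [h5, mul_zero]
    simp only [map_add, map_smul, mul_add, mul_smul_comm, ← ha, ← hb, ← hc] at h6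
    rw [← h6]
    have hcc : c * c = 0 := ExteriorAlgebra.ι_sq_zero _
    have hmc : ∀ (r : SphereRing k) (u v : ExteriorAlgebra (SphereRing k) Ω[SphereRing k⁄k]),
        u * r • v = r • (u * v) := fun r u v => Algebra.mul_smul_comm r u v
    rw [hmc, hmc, hmc, hcc, smul_zero, add_zero]
  have haa : a * a = 0 := ExteriorAlgebra.ι_sq_zero _
  have hbb : b * b = 0 := ExteriorAlgebra.ι_sq_zero _
  have habs : a * b + b * a = 0 := ExteriorAlgebra.ι_add_mul_swap _ _
  have hsm : ∀ (r : SphereRing k) (u v : ExteriorAlgebra (SphereRing k) Ω[SphereRing k⁄k]),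
      r • u * v = r • (u * v) := fun r u v => Algebra.smul_mul_assoc r u v
  rw [hD1, hD2]
  simp only [map_add, map_smul, ← ha, ← hb, ← hc, add_mul, hsm]
  linear_combination (norm := module)
    ((x ^ 2 + y ^ 2) ^ n : SphereRing k) • key
    + (((x ^ 2 + y ^ 2) ^ n * z + x * z * ((n : SphereRing k) * (x ^ 2 + y ^ 2) ^ (n - 1) * (2 * x))) : SphereRing k) • haa
    + (((x ^ 2 + y ^ 2) ^ n * z + y * z * ((n : SphereRing k) * (x ^ 2 + y ^ 2) ^ (n - 1) * (2 * y))) : SphereRing k) • hbb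
    + ((y * z * ((n : SphereRing k) * (x ^ 2 + y ^ 2) ^ (n - 1) * (2 * x))) : SphereRing k) • habs
end
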